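/- arXiv:1907.09644 — 7 statements merged into one kernel-verified Lean document; each statement's English description precedes it below -/
import Mathlib

section
/- The dual of a demimatroid is a demimatroid, and the double dual equals the original: if M = (E, ρ) is a demimatroid and ρ*(X) := |X| + ρ(E \ X) − ρ(E), then (E, ρ*) is a demimatroid and ρ** = ρ. -/
/-! Deleting `x` from `E \ X` is adding `x` to `X`, so the two inequalities of the insertion axiom
for `ρ` at `E \ insert x X` become, swapped, the two inequalities for `ρ*` at `X`. Nonnegativity of
`ρ*` is the bound `ρ E ≤ ρ (E \ X) + |X|`, from adding the points of `X` one at a time. -/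

open Finset

/-- A demimatroid on ground set `E`: a nonnegative integer-valued function on subsets
with `ρ ∅ = 0` and `ρ X ≤ ρ (X ∪ {x}) ≤ ρ X + 1`. -/
def IsDemimatroid {α : Type*} [DecidableEq α] (E : Finset α) (ρ : Finset α → ℤ) : Prop :=
  ρ ∅ = 0 ∧ (∀ X ⊆ E, 0 ≤ ρ X) ∧
    ∀ X ⊆ E, ∀ x ∈ E, ρ X ≤ ρ (insert x X) ∧ ρ (insert x X) ≤ ρ X + 1

/-- The dual rank function `ρ*(X) = |X| + ρ(E \ X) - ρ(E)`. -/
def dualFn {α : Type*} [DecidableEq α] (E : Finset α) (ρ : Finset α → ℤ) : Finset α → ℤ :=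
  fun X => X.card + ρ (E \ X) - ρ E

section

variable {α : Type*} [DecidableEq α] {E X : Finset α} {ρ : Finset α → ℤ}

@[simp]
lemma dualFn_empty : dualFn E ρ ∅ = 0 := by
  simp [dualFn]

lemma dualFn_dualFn (h₀ : ρ ∅ = 0) (hX : X ⊆ E) : dualFn E (dualFn E ρ) X = ρ X := by
  have hcard : ((E \ X).card : ℤ) + X.card = E.card := mod_cast card_sdiff_add_card_eq_card hX
  simp only [dualFn, Finset.sdiff_sdiff_eq_self hX, Finset.sdiff_self, h₀]
  linarith

namespace IsDemimatroid

lemma rank_union_le_add_card (h : IsDemimatroid E ρ) {A S : Finset α} (hA : A ⊆ E) (hS : S ⊆ E) :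
    ρ (A ∪ S) ≤ ρ A + S.card := by
  induction S using Finset.induction with
  | empty => simp
  | @insert a S ha ih =>
    have hAS : A ∪ S ⊆ E := union_subset hA ((subset_insert a S).trans hS)
    have hstep := (h.2.2 (A ∪ S) hAS a (hS (mem_insert_self a S))).2
    rw [union_insert, card_insert_of_notMem ha]
    push_cast
    linarith [ih ((subset_insert a S).trans hS)]

lemma dualFn_nonneg (h : IsDemimatroid E ρ) (hX : X ⊆ E) : 0 ≤ dualFn E ρ X := by
  have hbound := h.rank_union_le_add_card (A := E \ X) sdiff_subset hX
  rw [sdiff_union_of_subset hX] at hbound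
  simp only [dualFn]
  linarith

lemma dualFn_le_dualFn_insert_le_add_one (h : IsDemimatroid E ρ) {x : α} (hx : x ∈ E) :
    dualFn E ρ X ≤ dualFn E ρ (insert x X) ∧ dualFn E ρ (insert x X) ≤ dualFn E ρ X + 1 := by
  by_cases hxX : x ∈ X
  · rw [insert_eq_of_mem hxX]
    omega
  have hcompl : insert x (E \ insert x X) = E \ X := by
    rw [sdiff_insert, insert_erase (mem_sdiff.2 ⟨hx, hxX⟩)]
  have hins := h.2.2 (E \ insert x X) sdiff_subset x hx
  rw [hcompl] at hins
  simp only [dualFn, card_insert_of_notMem hxX]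
  push_cast
  constructor <;> linarith [hins.1, hins.2]

lemma dual (h : IsDemimatroid E ρ) : IsDemimatroid E (dualFn E ρ) :=
  ⟨dualFn_empty, fun _ hX => h.dualFn_nonneg hX, fun _ _ _ hx => h.dualFn_le_dualFn_insert_le_add_one hx⟩

end IsDemimatroid

end

theorem dual_isDemimatroid_and_dual_dual {α : Type*} [DecidableEq α]
    (E : Finset α) (ρ : Finset α → ℤ) (h : IsDemimatroid E ρ) :
    IsDemimatroid E (dualFn E ρ) ∧ ∀ X ⊆ E, dualFn E (dualFn E ρ) X = ρ X :=
  ⟨h.dual, fun _ hX => dualFn_dualFn h.1 hX⟩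
end

section
/- If M = (E, ρ) is a demimatroid, then the supplement function ρ⋄(X) := ρ(E) − ρ(E \ X) defines a demimatroid (E, ρ⋄). -/
open Finset

/-! Complementation inside `E` turns monotonicity of `ρ` into monotonicity of the supplement
`ρ⋄`, and since `E \ X` is covered by `E \ insert x X` plus the single element `x`, the unit
increase property of `ρ` bounds the increase of `ρ⋄` by one. -/

namespace IsDemimatroid

variable {α : Type*} [DecidableEq α] {E : Finset α} {ρ : Finset α → ℤ}

theorem le_union (h : IsDemimatroid E ρ) {A : Finset α} (hA : A ⊆ E) {D : Finset α}
    (hD : D ⊆ E) : ρ A ≤ ρ (D ∪ A) := by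
  induction D using Finset.induction_on with
  | empty => simp
  | insert x D _ ih =>
    obtain ⟨hxE, hDE⟩ := insert_subset_iff.mp hD
    rw [insert_union]
    exact (ih hDE).trans (h.2.2 _ (union_subset hDE hA) x hxE).1

theorem le_of_subset (h : IsDemimatroid E ρ) {A B : Finset α} (hB : B ⊆ E) (hAB : A ⊆ B) :
    ρ A ≤ ρ B :=
  sdiff_union_of_subset hAB ▸ h.le_union (hAB.trans hB) (sdiff_subset.trans hB)

end IsDemimatroid

theorem supplement_isDemimatroid {α : Type*} [DecidableEq α]
    (E : Finset α) (ρ : Finset α → ℤ) (h : IsDemimatroid E ρ) :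
    IsDemimatroid E (fun X => ρ E - ρ (E \ X)) := by
  refine ⟨by simp, fun X _ => sub_nonneg.2 (h.le_of_subset subset_rfl sdiff_subset),
    fun X _ x hx => ⟨?_, ?_⟩⟩
  · exact sub_le_sub_left
      (h.le_of_subset sdiff_subset (sdiff_subset_sdiff subset_rfl (subset_insert x X))) _
  · have hcover : E \ X ⊆ insert x (E \ insert x X) :=
      sdiff_insert E X x ▸ insert_erase_subset x (E \ X)
    have hmono := h.le_of_subset (insert_subset hx sdiff_subset) hcover
    have hstep := (h.2.2 (E \ insert x X) sdiff_subset x hx).2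
    dsimp only
    linarith
end

section
/- If α and β are demimatroids on the same finite ground set E, then their pointwise maximum α ∨ β and pointwise minimum α ∧ β are demimatroids; moreover, the set of demimatroids on E with these operations forms a bounded distributive lattice whose maximum is X ↦ |X| and whose minimum is X ↦ 0. -/
open Finset

namespace IsDemimatroid

variable {α : Type*} [DecidableEq α] {E : Finset α} {ρ σ : Finset α → ℤ}

lemma sup (hρ : IsDemimatroid E ρ) (hσ : IsDemimatroid E σ) :
    IsDemimatroid E (fun X => max (ρ X) (σ X)) := by
  obtain ⟨hρ0, hρnn, hρstep⟩ := hρ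
  obtain ⟨hσ0, -, hσstep⟩ := hσ
  refine ⟨by simp [hρ0, hσ0], fun X hX => le_max_of_le_left (hρnn X hX), fun X hX x hx => ?_⟩
  obtain ⟨hρmono, hρunit⟩ := hρstep X hX x hx
  obtain ⟨hσmono, hσunit⟩ := hσstep X hX x hx
  exact ⟨max_le_max hρmono hσmono, (max_le_max hρunit hσunit).trans_eq (max_add_add_right _ _ 1)⟩

lemma inf (hρ : IsDemimatroid E ρ) (hσ : IsDemimatroid E σ) :
    IsDemimatroid E (fun X => min (ρ X) (σ X)) := by
  obtain ⟨hρ0, hρnn, hρstep⟩ := hρ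
  obtain ⟨hσ0, hσnn, hσstep⟩ := hσ
  refine ⟨by simp [hρ0, hσ0], fun X hX => le_min (hρnn X hX) (hσnn X hX), fun X hX x hx => ?_⟩
  obtain ⟨hρmono, hρunit⟩ := hρstep X hX x hx
  obtain ⟨hσmono, hσunit⟩ := hσstep X hX x hx
  exact ⟨min_le_min hρmono hσmono, (min_le_min hρunit hσunit).trans_eq (min_add_add_right _ _ 1)⟩

lemma le_card (hρ : IsDemimatroid E ρ) {X : Finset α} (hX : X ⊆ E) : ρ X ≤ #X := by
  induction X using Finset.induction_on with
  | empty => simp [hρ.1]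
  | @insert x X hxX ih =>
    have hXE : X ⊆ E := (subset_insert x X).trans hX
    calc ρ (insert x X) ≤ ρ X + 1 := (hρ.2.2 X hXE x (hX (mem_insert_self x X))).2
      _ ≤ #X + 1 := by gcongr; exact ih hXE
      _ = #(insert x X) := by rw [card_insert_of_notMem hxX]; push_cast; rfl

end IsDemimatroid

lemma isDemimatroid_card {α : Type*} [DecidableEq α] (E : Finset α) :
    IsDemimatroid E (fun X => (#X : ℤ)) :=
  ⟨by simp, fun X _ => by positivity, fun X _ x _ =>
    ⟨Nat.cast_le.mpr (card_le_card (subset_insert x X)),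
      (Nat.cast_le.mpr (card_insert_le x X)).trans_eq (Nat.cast_succ _)⟩⟩

lemma isDemimatroid_zero {α : Type*} [DecidableEq α] (E : Finset α) :
    IsDemimatroid E (fun _ => (0 : ℤ)) :=
  ⟨rfl, fun _ _ => le_rfl, fun _ _ _ _ => by simp⟩

theorem demimatroids_bounded_distributive_lattice {α : Type*} [DecidableEq α] (E : Finset α) :
    (∀ a b : Finset α → ℤ, IsDemimatroid E a → IsDemimatroid E b →
        IsDemimatroid E (fun X => max (a X) (b X)) ∧
        IsDemimatroid E (fun X => min (a X) (b X))) ∧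
    IsDemimatroid E (fun X => (X.card : ℤ)) ∧
    IsDemimatroid E (fun _ => (0 : ℤ)) ∧
    (∀ a : Finset α → ℤ, IsDemimatroid E a → ∀ X ⊆ E, 0 ≤ a X ∧ a X ≤ X.card) ∧
    (∀ a b c : Finset α → ℤ, IsDemimatroid E a → IsDemimatroid E b → IsDemimatroid E c →
        ∀ X ⊆ E, min (a X) (max (b X) (c X)) = max (min (a X) (b X)) (min (a X) (c X))) :=
  ⟨fun _ _ ha hb => ⟨ha.sup hb, ha.inf hb⟩,
    isDemimatroid_card E,
    isDemimatroid_zero E,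
    fun _ ha _ hX => ⟨ha.2.1 _ hX, ha.le_card hX⟩,
    fun a b c _ _ _ X _ => min_max_distrib_left (a X) (b X) (c X)⟩
end

section
/- For a demimatroid M = (E, ρ) of rank k = ρ(E), the image of ρ is exactly {0, 1, …, k}, and the Wei numbers satisfy 0 < d_1(M) < d_2(M) < ⋯ < d_k(M) ≤ |E|. -/
open Finset

/-- The `r`-th Wei number `d_r(M) = min { |X| : X ⊆ E, ρ(X) = r }`. -/
noncomputable def weiNumber {α : Type*} [DecidableEq α] (E : Finset α) (ρ : Finset α → ℤ)
    (r : ℤ) : ℕ :=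
  sInf {m : ℕ | ∃ X ⊆ E, ρ X = r ∧ X.card = m}

/-! The rank grows by steps of at most one along any chain `∅ ⊆ … ⊆ Y` built by adding one
element at a time, so it passes through every level between `0` and `ρ Y`. A smallest set of
rank `r + 1` therefore has a proper subset of rank `r`, which makes the Wei numbers strictly
increasing. -/

section

variable {α : Type*} [DecidableEq α] {E : Finset α} {ρ : Finset α → ℤ}

namespace IsDemimatroid

variable (h : IsDemimatroid E ρ)
include h

theorem rank_empty : ρ ∅ = 0 := h.1

theorem rank_le_rank_insert {X : Finset α} (hX : X ⊆ E) {x : α} (hx : x ∈ E) :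
    ρ X ≤ ρ (insert x X) :=
  (h.2.2 X hX x hx).1

theorem rank_insert_le {X : Finset α} (hX : X ⊆ E) {x : α} (hx : x ∈ E) :
    ρ (insert x X) ≤ ρ X + 1 :=
  (h.2.2 X hX x hx).2

theorem rank_le_rank_union (X : Finset α) {D : Finset α} (hXD : X ∪ D ⊆ E) :
    ρ X ≤ ρ (X ∪ D) := by
  induction D using Finset.induction_on with
  | empty => simp
  | insert a D _ ih =>
    have hXD' : X ∪ D ⊆ E := (union_subset_union_right (subset_insert a D)).trans hXD
    have haE : a ∈ E := hXD (mem_union_right X (mem_insert_self a D))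
    calc ρ X ≤ ρ (X ∪ D) := ih hXD'
      _ ≤ ρ (insert a (X ∪ D)) := h.rank_le_rank_insert hXD' haE
      _ = ρ (X ∪ insert a D) := by rw [union_insert]

theorem rank_mono {X Y : Finset α} (hXY : X ⊆ Y) (hY : Y ⊆ E) : ρ X ≤ ρ Y := by
  have hunion : X ∪ (Y \ X) = Y := union_sdiff_of_subset hXY
  have hle := h.rank_le_rank_union X (D := Y \ X) (by rwa [hunion])
  rwa [hunion] at hle

theorem exists_subset_rank_eq {Y : Finset α} (hY : Y ⊆ E) {r : ℤ} (hr₀ : 0 ≤ r)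
    (hrY : r ≤ ρ Y) : ∃ Z ⊆ Y, ρ Z = r := by
  induction Y using Finset.induction_on generalizing r with
  | empty => exact ⟨∅, subset_rfl, by linarith [h.rank_empty]⟩
  | insert a Y _ ih =>
    have hYE : Y ⊆ E := (subset_insert a Y).trans hY
    by_cases hr : r ≤ ρ Y
    · obtain ⟨Z, hZY, hZ⟩ := ih hYE hr₀ hr
      exact ⟨Z, hZY.trans (subset_insert a Y), hZ⟩
    · have hstep := h.rank_insert_le hYE (hY (mem_insert_self a Y))
      exact ⟨insert a Y, subset_rfl, by omega⟩

end IsDemimatroid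

theorem exists_rank_eq_card_eq_weiNumber {r : ℤ} (hr : ∃ X ⊆ E, ρ X = r) :
    ∃ X ⊆ E, ρ X = r ∧ X.card = weiNumber E ρ r := by
  obtain ⟨X, hXE, hX⟩ := hr
  exact Nat.sInf_mem (s := {m : ℕ | ∃ X ⊆ E, ρ X = r ∧ X.card = m})
    ⟨X.card, X, hXE, hX, rfl⟩

theorem weiNumber_le_card {X : Finset α} (hX : X ⊆ E) : weiNumber E ρ (ρ X) ≤ X.card :=
  Nat.sInf_le ⟨X, hX, rfl, rfl⟩

theorem IsDemimatroid.weiNumber_pos (h : IsDemimatroid E ρ) (hr : ∃ X ⊆ E, ρ X = 1) :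
    0 < weiNumber E ρ 1 := by
  obtain ⟨X, -, hX, hcard⟩ := exists_rank_eq_card_eq_weiNumber hr
  rw [← hcard, card_pos, nonempty_iff_ne_empty]
  rintro rfl
  simp [h.rank_empty] at hX

theorem IsDemimatroid.weiNumber_lt_weiNumber_add_one (h : IsDemimatroid E ρ) {r : ℤ}
    (hr₀ : 0 ≤ r) (hr : ∃ X ⊆ E, ρ X = r + 1) :
    weiNumber E ρ r < weiNumber E ρ (r + 1) := by
  obtain ⟨X, hXE, hX, hcard⟩ := exists_rank_eq_card_eq_weiNumber hr
  obtain ⟨Z, hZX, hZ⟩ := h.exists_subset_rank_eq hXE hr₀ (by omega)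
  have hZX' : Z ⊂ X := ssubset_of_subset_of_ne hZX (by rintro rfl; omega)
  calc weiNumber E ρ r = weiNumber E ρ (ρ Z) := by rw [hZ]
    _ ≤ Z.card := weiNumber_le_card (hZX.trans hXE)
    _ < X.card := card_lt_card hZX'
    _ = weiNumber E ρ (r + 1) := hcard

end

theorem demimatroid_levels_and_wei_chain {α : Type*} [DecidableEq α]
    (E : Finset α) (ρ : Finset α → ℤ) (h : IsDemimatroid E ρ) (hnt : 1 ≤ ρ E) :
    ((∀ r : ℤ, 0 ≤ r → r ≤ ρ E → ∃ X ⊆ E, ρ X = r) ∧ ∀ X ⊆ E, ρ X ≤ ρ E) ∧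
    0 < weiNumber E ρ 1 ∧
    (∀ r : ℤ, 1 ≤ r → r < ρ E → weiNumber E ρ r < weiNumber E ρ (r + 1)) ∧
    weiNumber E ρ (ρ E) ≤ E.card := by
  have levels : ∀ r : ℤ, 0 ≤ r → r ≤ ρ E → ∃ X ⊆ E, ρ X = r := fun r hr₀ hrE =>
    h.exists_subset_rank_eq subset_rfl hr₀ hrE
  refine ⟨⟨levels, fun X hX => h.rank_mono hX subset_rfl⟩,
    h.weiNumber_pos (levels 1 zero_le_one hnt), ?_, weiNumber_le_card subset_rfl⟩
  intro r hr₁ hrE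
  exact h.weiNumber_lt_weiNumber_add_one (by omega) (levels (r + 1) (by omega) (by omega))
end

section
/- Generalized Singleton bound: for a demimatroid M = (E, ρ) of rank k = ρ(E), one has k + d_r(M) ≤ |E| + r for all 1 ≤ r ≤ k. -/
/-! Removing one element lowers the rank by at most one, so peeling elements off `E` one at a
time reaches rank `r` after deleting at least `ρ E - r` of them. -/

open Finset

theorem exists_subset_eq_of_le_of_insert_le_add_one {α : Type*} [DecidableEq α]
    {E : Finset α} {ρ : Finset α → ℤ} (hstep : ∀ X ⊆ E, ∀ x ∈ E, ρ (insert x X) ≤ ρ X + 1)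
    {X : Finset α} (hX : X ⊆ E) {r : ℤ} (hr₀ : ρ ∅ ≤ r) (hr : r ≤ ρ X) :
    ∃ Y ⊆ X, ρ Y = r ∧ ρ X + Y.card ≤ X.card + r := by
  induction X using Finset.induction_on with
  | empty => exact ⟨∅, subset_rfl, le_antisymm hr₀ hr, by simpa using hr₀⟩
  | insert a s ha ih =>
    have hsE : s ⊆ E := (subset_insert a s).trans hX
    by_cases heq : ρ (insert a s) = r
    · exact ⟨insert a s, subset_rfl, heq, by omega⟩
    have hdrop := hstep s hsE a (hX (mem_insert_self a s))
    obtain ⟨Y, hYs, hYr, hYcard⟩ := ih hsE (by omega)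
    refine ⟨Y, hYs.trans (subset_insert a s), hYr, ?_⟩
    rw [card_insert_of_notMem ha]
    push_cast
    omega

theorem weiNumber_le_card_s10 {α : Type*} [DecidableEq α] {E : Finset α} {ρ : Finset α → ℤ}
    {Y : Finset α} (hY : Y ⊆ E) : weiNumber E ρ (ρ Y) ≤ Y.card :=
  Nat.sInf_le ⟨Y, hY, rfl, rfl⟩

theorem generalized_singleton_bound {α : Type*} [DecidableEq α]
    (E : Finset α) (ρ : Finset α → ℤ) (h : IsDemimatroid E ρ) :
    ∀ r : ℤ, 1 ≤ r → r ≤ ρ E → ρ E + (weiNumber E ρ r : ℤ) ≤ E.card + r := by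
  intro r hr₁ hrE
  obtain ⟨hρ₀, -, hstep⟩ := h
  obtain ⟨Y, hYE, rfl, hYcard⟩ := exists_subset_eq_of_le_of_insert_le_add_one
    (fun X hX x hx => (hstep X hX x hx).2) subset_rfl (by omega) hrE
  have hwei := weiNumber_le_card_s10 (ρ := ρ) hYE
  omega
end

section
/- MacWilliams identity for combinatroids: W_{M*}(x, y, t) = t^{−η(M)} W_M(x + (t−1)y, x − y, t), where W_M(x,y,t) := (x−y)^{η(M)} y^{ρ(M)} T_M(x/y, (x+(t−1)y)/(x−y)), η(M) = |E| − ρ(E), ρ(M) = ρ(E). -/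
/-!
Complementation `A ↦ E \ A` exchanges the two exponents of the Tutte sum, so `T_{M*}(x, y) = T_M(y, x)`.
Under the substitution `(x, y) ↦ (x + (t - 1) y, x - y)` the two arguments `x / y` and
`(x + (t - 1) y) / (x - y)` of `T_M` in `W_M` are swapped as well (the second one becomes `t x / (t y)`),
and the prefactor `(x - y)^η y^ρ` becomes `(t y)^η (x - y)^ρ`, which is `t^η` times the prefactor of `W_{M*}`.
-/

open Finset

/-- The Tutte polynomial (rational function) of a combinatroid,
`T_M(x,y) = Σ_{A ⊆ E} (x-1)^{ρ(E)-ρ(A)} (y-1)^{|A|-ρ(A)}`. -/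
def tutte {α : Type*} [DecidableEq α] (E : Finset α) (ρ : Finset α → ℤ) (x y : ℚ) : ℚ :=
  ∑ A ∈ E.powerset, (x - 1) ^ (ρ E - ρ A) * (y - 1) ^ ((A.card : ℤ) - ρ A)

/-- The Hamming polynomial of a combinatroid,
`W_M(x,y,t) = (x-y)^{η(M)} y^{ρ(M)} T_M(x/y, (x+(t-1)y)/(x-y))`. -/
def hamming {α : Type*} [DecidableEq α] (E : Finset α) (ρ : Finset α → ℤ) (x y t : ℚ) : ℚ :=
  (x - y) ^ ((E.card : ℤ) - ρ E) * y ^ (ρ E) *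
    tutte E ρ (x / y) ((x + (t - 1) * y) / (x - y))

namespace Finset

theorem sum_powerset_sdiff {α β : Type*} [DecidableEq α] [AddCommMonoid β]
    (E : Finset α) (f : Finset α → β) :
    ∑ A ∈ E.powerset, f (E \ A) = ∑ A ∈ E.powerset, f A :=
  sum_nbij' (E \ ·) (E \ ·) (by simp) (by simp)
    (fun _ hA => sdiff_sdiff_eq_self (mem_powerset.mp hA))
    (fun _ hA => sdiff_sdiff_eq_self (mem_powerset.mp hA))
    (fun _ _ => rfl)

end Finset

section Combinatroid

variable {α : Type*} [DecidableEq α] {E : Finset α} {ρ : Finset α → ℤ}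

theorem dualFn_self (h0 : ρ ∅ = 0) : dualFn E ρ E = E.card - ρ E := by
  simp [dualFn, h0]

theorem dualFn_self_sub_dualFn_sdiff (h0 : ρ ∅ = 0) {A : Finset α} (hA : A ⊆ E) :
    dualFn E ρ E - dualFn E ρ (E \ A) = A.card - ρ A := by
  simp only [dualFn, Finset.sdiff_self, h0, Finset.sdiff_sdiff_eq_self hA,
    card_sdiff_of_subset hA, Nat.cast_sub (card_le_card hA)]
  ring

theorem card_sdiff_sub_dualFn_sdiff {A : Finset α} (hA : A ⊆ E) :
    ((E \ A).card : ℤ) - dualFn E ρ (E \ A) = ρ E - ρ A := by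
  simp only [dualFn, Finset.sdiff_sdiff_eq_self hA]
  ring

theorem tutte_dualFn (h0 : ρ ∅ = 0) (x y : ℚ) :
    tutte E (dualFn E ρ) x y = tutte E ρ y x := by
  rw [tutte, ← sum_powerset_sdiff, tutte]
  refine sum_congr rfl fun A hA => ?_
  rw [dualFn_self_sub_dualFn_sdiff h0 (mem_powerset.mp hA),
    card_sdiff_sub_dualFn_sdiff (mem_powerset.mp hA), mul_comm]

end Combinatroid

theorem macwilliams_identity {α : Type*} [DecidableEq α]
    (E : Finset α) (ρ : Finset α → ℤ) (h0 : ρ ∅ = 0) :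
    ∀ x y t : ℚ, y ≠ 0 → t ≠ 0 → x ≠ y →
      hamming E (dualFn E ρ) x y t =
        t ^ (-((E.card : ℤ) - ρ E)) * hamming E ρ (x + (t - 1) * y) (x - y) t := by
  intro x y t _ ht _
  have hdiff : x + (t - 1) * y - (x - y) = t * y := by ring
  have hratio : (x + (t - 1) * y + (t - 1) * (x - y)) / (t * y) = x / y := by
    rw [show x + (t - 1) * y + (t - 1) * (x - y) = t * x by ring, mul_div_mul_left _ _ ht]
  rw [hamming, hamming, tutte_dualFn h0, dualFn_self h0, hdiff, hratio, mul_zpow,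
    sub_sub_cancel, zpow_neg]
  field_simp
end

section
/- For a demimatroid M = (E, ρ) with nullity function η and 0 ≤ i ≤ η(E), the i-th elongation ρ^{[i]}(σ) := min{|σ|, ρ(σ) + i} defines a demimatroid M[i] of rank ρ(E) + i, its nullity function is η^{[i]}(σ) = max{0, η(σ) − i}, and d_{r+1}(M°) = d_1(M[r]°), where M° denotes the demimatroid with rank function η and d_s(N) := min{|X| : rank_N(X) = s}. -/
open Finset

/-- The `i`-th elongation of a rank function: `ρ^[i](σ) = min(|σ|, ρ(σ) + i)`. -/
def elongation {α : Type*} [DecidableEq α] (ρ : Finset α → ℤ) (i : ℤ) : Finset α → ℤ :=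
  fun σ => min (σ.card : ℤ) (ρ σ + i)

section Elongation

variable {α : Type*} [DecidableEq α]

theorem isDemimatroid_elongation {E : Finset α} {ρ : Finset α → ℤ} (h : IsDemimatroid E ρ)
    {i : ℤ} (hi : 0 ≤ i) : IsDemimatroid E (elongation ρ i) := by
  obtain ⟨h_empty, h_nonneg, h_step⟩ := h
  refine ⟨by simp [elongation, h_empty, hi], fun X hX => ?_, fun X hX x hx => ?_⟩
  · have := h_nonneg X hX
    exact le_min (Int.natCast_nonneg _) (by omega)
  · have h_rank := h_step X hX x hx
    have h_card_le : X.card ≤ (insert x X).card := card_le_card (subset_insert x X)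
    have h_card_succ : (insert x X).card ≤ X.card + 1 := card_insert_le x X
    simp only [elongation]
    constructor <;> omega

theorem elongation_eq_add_of_le {ρ : Finset α → ℤ} {i : ℤ} {σ : Finset α}
    (h : i ≤ (σ.card : ℤ) - ρ σ) : elongation ρ i σ = ρ σ + i :=
  min_eq_right (by omega)

theorem card_sub_elongation (ρ : Finset α → ℤ) (i : ℤ) (σ : Finset α) :
    (σ.card : ℤ) - elongation ρ i σ = max 0 ((σ.card : ℤ) - ρ σ - i) := by
  simp only [elongation]
  omega

theorem weiNumber_congr {E : Finset α} {ρ ρ' : Finset α → ℤ} {r r' : ℤ}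
    (h : ∀ X ⊆ E, ρ X = r ↔ ρ' X = r') : weiNumber E ρ r = weiNumber E ρ' r' := by
  unfold weiNumber
  congr 1
  ext m
  exact exists_congr fun X => and_congr_right fun hX => and_congr_left' (h X hX)

/-- `d_s(M[i]°) = d_{s+i}(M°)`: the elongated nullity `max 0 (η - i)` takes a positive value `s`
exactly where `η` takes the value `s + i`. -/
theorem weiNumber_nullity_elongation (E : Finset α) (ρ : Finset α → ℤ) (i : ℤ) {s : ℤ}
    (hs : 0 < s) :
    weiNumber E (fun σ => (σ.card : ℤ) - elongation ρ i σ) s =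
      weiNumber E (fun σ => (σ.card : ℤ) - ρ σ) (s + i) :=
  weiNumber_congr fun X _ => by
    rw [card_sub_elongation]
    omega

end Elongation

theorem elongation_properties {α : Type*} [DecidableEq α]
    (E : Finset α) (ρ : Finset α → ℤ) (h : IsDemimatroid E ρ)
    (i : ℤ) (hi0 : 0 ≤ i) (hi : i ≤ (E.card : ℤ) - ρ E) :
    IsDemimatroid E (elongation ρ i) ∧
    elongation ρ i E = ρ E + i ∧
    (∀ σ ⊆ E, (σ.card : ℤ) - elongation ρ i σ = max 0 ((σ.card : ℤ) - ρ σ - i)) ∧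
    (∀ r : ℤ, 0 ≤ r → r + 1 ≤ (E.card : ℤ) - ρ E →
      weiNumber E (fun σ => (σ.card : ℤ) - ρ σ) (r + 1) =
        weiNumber E (fun σ => (σ.card : ℤ) - elongation ρ r σ) 1) := by
  refine ⟨isDemimatroid_elongation h hi0, elongation_eq_add_of_le hi,
    fun σ _ => card_sub_elongation ρ i σ, fun r _ _ => ?_⟩
  rw [weiNumber_nullity_elongation E ρ r one_pos, add_comm]
end
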